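/- For any HDA X, the unfolding X̃ is a higher-dimensional tree. Moreover, if X itself is a higher-dimensional tree, then the projection π_X : X̃ → X is an isomorphism of HDA. -/

import Mathlib

set_option autoImplicit false

/-- A precubical set: a graded set with face maps `δ_k^ν` (ν encoded as `Bool`,
`false` = lower face `δ^0`, `true` = upper face `δ^1`; indices are 0-based)
satisfying the precubical identity. -/
structure PCSet : Type 1 where
  cube : ℕ → Type
  face : ∀ {n : ℕ}, Bool → Fin (n + 1) → cube (n + 1) → cube n
  precub : ∀ {n : ℕ} (ν μ : Bool) (k l : ℕ) (hk : k < n + 1) (hl : l < n + 2)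
      (_ : k < l) (x : cube (n + 2)),
      face ν ⟨k, hk⟩ (face μ ⟨l, hl⟩ x) =
        face μ ⟨l - 1, by omega⟩ (face ν ⟨k, by omega⟩ x)

namespace PCSet

/-- A cube of arbitrary dimension. -/
abbrev Cell (X : PCSet) : Type := Σ n : ℕ, X.cube n

/-- One step of a cube path: either `x = δ_k^0 y` or `y = δ_k^1 x`. -/
def Step (X : PCSet) (x y : X.Cell) : Prop :=
  (∃ (n : ℕ) (k : Fin (n + 1)) (c : X.cube (n + 1)),
      x = ⟨n, X.face false k c⟩ ∧ y = ⟨n + 1, c⟩) ∨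
  (∃ (n : ℕ) (k : Fin (n + 1)) (c : X.cube (n + 1)),
      x = ⟨n + 1, c⟩ ∧ y = ⟨n, X.face true k c⟩)

/-- A cube path: a nonempty sequence of cubes, consecutive ones related by `Step`. -/
def IsCubePath (X : PCSet) (l : List X.Cell) : Prop :=
  l ≠ [] ∧ l.Chain' X.Step

/-- Adjacency condition (1): `x_{p−1} = δ_k^0 x_p`, `x_p = δ_ℓ^0 x_{p+1}`,
`y_{p−1} = δ_{ℓ−1}^0 y_p`, `y_p = δ_k^0 y_{p+1}`, `k < ℓ`.
Here `a = x_{p-1} = y_{p-1}`, `b = x_p`, `b' = y_p`, `c = x_{p+1} = y_{p+1}`. -/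
def Adj1 (X : PCSet) (a b b' c : X.Cell) : Prop :=
  ∃ (n k l : ℕ) (hk : k < n + 1) (hl : l < n + 2) (_ : k < l) (u : X.cube (n + 2)),
    c = ⟨n + 2, u⟩ ∧
    b = ⟨n + 1, X.face false ⟨l, hl⟩ u⟩ ∧
    b' = ⟨n + 1, X.face false ⟨k, by omega⟩ u⟩ ∧
    a = ⟨n, X.face false ⟨k, hk⟩ (X.face false ⟨l, hl⟩ u)⟩ ∧
    a = ⟨n, X.face false ⟨l - 1, by omega⟩ (X.face false ⟨k, by omega⟩ u)⟩

/-- Adjacency condition (2): `x_p = δ_k^1 x_{p−1}`, `x_{p+1} = δ_ℓ^1 x_p`,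
`y_p = δ_{ℓ−1}^1 y_{p−1}`, `y_{p+1} = δ_k^1 y_p`, `k < ℓ`. -/
def Adj2 (X : PCSet) (a b b' c : X.Cell) : Prop :=
  ∃ (n k l : ℕ) (hk : k < n + 2) (hl : l < n + 1) (_ : k < l) (u : X.cube (n + 2)),
    a = ⟨n + 2, u⟩ ∧
    b = ⟨n + 1, X.face true ⟨k, hk⟩ u⟩ ∧
    b' = ⟨n + 1, X.face true ⟨l - 1, by omega⟩ u⟩ ∧
    c = ⟨n, X.face true ⟨l, hl⟩ (X.face true ⟨k, hk⟩ u)⟩ ∧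
    c = ⟨n, X.face true ⟨k, by omega⟩ (X.face true ⟨l - 1, by omega⟩ u)⟩

/-- Adjacency condition (3): `x_p = δ_k^0 δ_ℓ^1 y_p`, `y_{p−1} = δ_k^0 y_p`,
`y_{p+1} = δ_ℓ^1 y_p`, `k < ℓ`. -/
def Adj3 (X : PCSet) (a b b' c : X.Cell) : Prop :=
  ∃ (n k l : ℕ) (hk : k < n + 1) (hl : l < n + 2) (_ : k < l) (u : X.cube (n + 2)),
    b' = ⟨n + 2, u⟩ ∧
    b = ⟨n, X.face false ⟨k, hk⟩ (X.face true ⟨l, hl⟩ u)⟩ ∧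
    a = ⟨n + 1, X.face false ⟨k, by omega⟩ u⟩ ∧
    c = ⟨n + 1, X.face true ⟨l, hl⟩ u⟩

/-- Adjacency condition (4): `x_p = δ_k^1 δ_ℓ^0 y_p`, `y_{p−1} = δ_ℓ^0 y_p`,
`y_{p+1} = δ_k^1 y_p`, `k < ℓ`. -/
def Adj4 (X : PCSet) (a b b' c : X.Cell) : Prop :=
  ∃ (n k l : ℕ) (hk : k < n + 1) (hl : l < n + 2) (_ : k < l) (u : X.cube (n + 2)),
    b' = ⟨n + 2, u⟩ ∧
    b = ⟨n, X.face true ⟨k, hk⟩ (X.face false ⟨l, hl⟩ u)⟩ ∧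
    a = ⟨n + 1, X.face false ⟨l, hl⟩ u⟩ ∧
    c = ⟨n + 1, X.face true ⟨k, by omega⟩ u⟩

/-- One of the four adjacency conditions holds, possibly with the roles of the
two paths exchanged. -/
def AdjMid (X : PCSet) (a b b' c : X.Cell) : Prop :=
  Adj1 X a b b' c ∨ Adj2 X a b b' c ∨ Adj3 X a b b' c ∨ Adj4 X a b b' c ∨
  Adj1 X a b' b c ∨ Adj2 X a b' b c ∨ Adj3 X a b' b c ∨ Adj4 X a b' b c

/-- Two cube paths are adjacent: they agree everywhere except at exactly one
(interior) index `p`, where one of the four exchange conditions holds. -/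
def Adjacent (X : PCSet) (l₁ l₂ : List X.Cell) : Prop :=
  X.IsCubePath l₁ ∧ X.IsCubePath l₂ ∧ l₁.length = l₂.length ∧
  ∃ p : ℕ, 0 < p ∧ p + 1 < l₁.length ∧
    (∀ q : ℕ, q ≠ p → l₁[q]? = l₂[q]?) ∧
    l₁[p]? ≠ l₂[p]? ∧
    ∃ a b b' c : X.Cell,
      l₁[p - 1]? = some a ∧ l₁[p]? = some b ∧ l₂[p]? = some b' ∧
      l₁[p + 1]? = some c ∧ X.AdjMid a b b' c

/-- Homotopy of cube paths: the reflexive-transitive closure of adjacency. -/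
def Homotopic (X : PCSet) : List X.Cell → List X.Cell → Prop :=
  Relation.ReflTransGen X.Adjacent

/-- Iterated application of face maps, parameters in application order. -/
inductive IterFace (X : PCSet) : X.Cell → List (ℕ × Bool) → X.Cell → Prop
  | nil (c : X.Cell) : IterFace X c [] c
  | cons {n : ℕ} (ν : Bool) (k : Fin (n + 1)) (c : X.cube (n + 1)) {l : List (ℕ × Bool)}
      {res : X.Cell} :
      IterFace X ⟨n, X.face ν k c⟩ l res →
      IterFace X ⟨n + 1, c⟩ ((k.1, ν) :: l) res

/-- `p` is obtained from `c` as `δ_{k_1}^{ν_1}⋯δ_{k_q}^{ν_q} c` where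
`k_1 < ⋯ < k_q` (in application order, the index list `ks` is strictly
decreasing). -/
def RepGen (X : PCSet) (c p : X.Cell) (ks : List ℕ) : Prop :=
  List.Pairwise (· > ·) ks ∧
  ∃ νs : List Bool, νs.length = ks.length ∧ IterFace X c (ks.zip νs) p

/-- `l` is a representing sequence for a precubical path object. -/
def IsRep (X : PCSet) (l : List X.Cell) : Prop :=
  l ≠ [] ∧ l.Nodup ∧ l.Chain' X.Step ∧
  ∀ p : X.Cell, ∃ c ∈ l, (∃ ks, RepGen X c p ks) ∧
    ∀ ks₁ ks₂ : List ℕ, RepGen X c p ks₁ → RepGen X c p ks₂ → ks₁ = ks₂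

/-- Morphisms of precubical sets. -/
structure Hom (X Y : PCSet) where
  map : ∀ n : ℕ, X.cube n → Y.cube n
  comm : ∀ (n : ℕ) (ν : Bool) (k : Fin (n + 1)) (x : X.cube (n + 1)),
    map n (X.face ν k x) = Y.face ν k (map (n + 1) x)

def Hom.id (X : PCSet) : Hom X X where
  map _ x := x
  comm _ _ _ _ := rfl

def Hom.comp {X Y Z : PCSet} (g : Hom Y Z) (f : Hom X Y) : Hom X Z where
  map n x := g.map n (f.map n x)
  comm n ν k x := by (try dsimp only); rw [f.comm, g.comm]

def Hom.cell {X Y : PCSet} (f : Hom X Y) (x : X.Cell) : Y.Cell := ⟨x.1, f.map x.1 x.2⟩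

/-- `R` is a precubical subset of the product `X × Y`. -/
def PrecubRel (X Y : PCSet) (R : Set (X.Cell × Y.Cell)) : Prop :=
  (∀ p ∈ R, p.1.1 = p.2.1) ∧
  ∀ (n : ℕ) (x : X.cube (n + 1)) (y : Y.cube (n + 1)),
    ((⟨n + 1, x⟩, ⟨n + 1, y⟩) : X.Cell × Y.Cell) ∈ R →
    ∀ (ν : Bool) (k : Fin (n + 1)),
      ((⟨n, X.face ν k x⟩, ⟨n, Y.face ν k y⟩) : X.Cell × Y.Cell) ∈ R

/-- One-step bisimulation via a precubical relation (condition (2) of Thm 3.4). -/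
def OneStepBisim (X Y : PCSet) (bx : X.Cell) (by' : Y.Cell) : Prop :=
  ∃ R : Set (X.Cell × Y.Cell), PrecubRel X Y R ∧ (bx, by') ∈ R ∧
    ∀ (n : ℕ) (x₁ : X.cube n) (y₁ : Y.cube n),
      ((⟨n, x₁⟩, ⟨n, y₁⟩) : X.Cell × Y.Cell) ∈ R →
      (∀ (x₂ : X.cube (n + 1)) (k : Fin (n + 1)), x₁ = X.face false k x₂ →
        ∃ y₂ : Y.cube (n + 1), y₁ = Y.face false k y₂ ∧
          ((⟨n + 1, x₂⟩, ⟨n + 1, y₂⟩) : X.Cell × Y.Cell) ∈ R) ∧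
      (∀ (y₂ : Y.cube (n + 1)) (k : Fin (n + 1)), y₁ = Y.face false k y₂ →
        ∃ x₂ : X.cube (n + 1), x₁ = X.face false k x₂ ∧
          ((⟨n + 1, x₂⟩, ⟨n + 1, y₂⟩) : X.Cell × Y.Cell) ∈ R)

/-- Cube-path matching bisimulation (condition (3) of Thm 3.4). -/
def PathBisim (X Y : PCSet) (bx : X.Cell) (by' : Y.Cell) : Prop :=
  ∃ R : Set (X.Cell × Y.Cell), PrecubRel X Y R ∧ (bx, by') ∈ R ∧
    ∀ (x₁ : X.Cell) (y₁ : Y.Cell), (x₁, y₁) ∈ R →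
      (∀ lx : List X.Cell, X.IsCubePath lx → lx.head? = some x₁ →
        ∃ ly : List Y.Cell, Y.IsCubePath ly ∧ ly.head? = some y₁ ∧
          ly.length = lx.length ∧ ∀ pr ∈ lx.zip ly, pr ∈ R) ∧
      (∀ ly : List Y.Cell, Y.IsCubePath ly → ly.head? = some y₁ →
        ∃ lx : List X.Cell, X.IsCubePath lx ∧ lx.head? = some x₁ ∧
          lx.length = ly.length ∧ ∀ pr ∈ lx.zip ly, pr ∈ R)

/-- A fan-shaped cube path: one-dimensional (alternating dimensions 0 and 1)
until it has to build up to its end cube of dimension `n`. -/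
def IsFan (X : PCSet) (l : List X.Cell) : Prop :=
  ∃ (n : ℕ) (c : X.cube n), l.getLast? = some ⟨n, c⟩ ∧
    ∀ (i : ℕ) (hi : i < l.length),
      (i + n + 1 ≤ l.length → (l.get ⟨i, hi⟩).1 = if i % 2 = 0 then 0 else 1) ∧
      (l.length < i + n + 1 → (l.get ⟨i, hi⟩).1 = n + i + 1 - l.length)

/-- The cube path `(x_1, …, x_n, x)` obtained by repeatedly taking lower faces
`x_j = δ_{k_j}^0 ⋯ δ_{k_n}^0 x`, one for each choice of indices `k_j ≤ j`. -/
def lowerChain (X : PCSet) : ∀ (n : ℕ), X.cube n → (∀ j : Fin n, Fin (j.1 + 1)) → List X.Cell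
  | 0, x, _ => [⟨0, x⟩]
  | n + 1, x, ks =>
      lowerChain X n (X.face false (ks ⟨n, Nat.lt_succ_self n⟩) x)
        (fun j => ks ⟨j.1, by omega⟩) ++ [⟨n + 1, x⟩]

end PCSet

open PCSet

/-- A higher-dimensional automaton: a pointed precubical set. -/
structure HDA extends PCSet where
  base : cube 0

/-- Pointed morphisms of higher-dimensional automata. -/
structure HDAHom (X Y : HDA) where
  toHom : Hom X.toPCSet Y.toPCSet
  pointed : toHom.map 0 X.base = Y.base

def HDAHom.id (X : HDA) : HDAHom X X := ⟨Hom.id _, rfl⟩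

def HDAHom.comp {X Y Z : HDA} (g : HDAHom Y Z) (f : HDAHom X Y) : HDAHom X Z :=
  ⟨g.toHom.comp f.toHom, by
    show g.toHom.map 0 (f.toHom.map 0 X.base) = Z.base
    rw [f.pointed, g.pointed]⟩

def HDAHom.IsIso {X Y : HDA} (f : HDAHom X Y) : Prop :=
  ∃ g : HDAHom Y X, g.comp f = HDAHom.id X ∧ f.comp g = HDAHom.id Y

/-- A pointed cube path: a cube path starting in the base point. -/
def HDA.IsPointedPath (X : HDA) (l : List X.toPCSet.Cell) : Prop :=
  X.toPCSet.IsCubePath l ∧ l.head? = some ⟨0, X.base⟩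

/-- A cube is reachable if some pointed cube path ends in it. -/
def HDA.Reachable (X : HDA) (x : X.toPCSet.Cell) : Prop :=
  ∃ l, X.IsPointedPath l ∧ l.getLast? = some x

/-- The type of pointed cube paths of `X` ending in an `n`-cube. -/
def HDA.PPath (X : HDA) (n : ℕ) : Type :=
  { l : List X.toPCSet.Cell //
      X.IsPointedPath l ∧ ∃ c : X.cube n, l.getLast? = some ⟨n, c⟩ }

/-- A pointed precubical path object (object of the category HDP). -/
def HDA.IsPathObj (P : HDA) : Prop :=
  ∃ l, IsRep P.toPCSet l ∧ l.head? = some ⟨0, P.base⟩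

/-- A cube path extension: maps the representation of `P` to an initial segment
of the representation of `Q`. -/
def IsExtension {P Q : HDA} (f : HDAHom P Q) : Prop :=
  ∃ (lp : List P.toPCSet.Cell) (lq : List Q.toPCSet.Cell),
    IsRep P.toPCSet lp ∧ lp.head? = some ⟨0, P.base⟩ ∧
    IsRep Q.toPCSet lq ∧ lq.head? = some ⟨0, Q.base⟩ ∧
    ∃ hle : lp.length ≤ lq.length,
      ∀ (j : ℕ) (hj : j < lp.length),
        f.toHom.cell (lp.get ⟨j, hj⟩) = lq.get ⟨j, lt_of_lt_of_le hj hle⟩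

/-- Morphisms of the category HDP: generated by pointed cube path extensions
and isomorphisms between pointed precubical path objects. -/
inductive IsHDPHom : ∀ {P Q : HDA}, HDAHom P Q → Prop
  | ext {P Q : HDA} (f : HDAHom P Q) :
      P.IsPathObj → Q.IsPathObj → IsExtension f → IsHDPHom f
  | iso {P Q : HDA} (f : HDAHom P Q) :
      P.IsPathObj → Q.IsPathObj → f.IsIso → IsHDPHom f
  | comp {P Q R : HDA} {f : HDAHom P Q} {g : HDAHom Q R} :
      IsHDPHom f → IsHDPHom g → IsHDPHom (g.comp f)

/-- Open maps of HDA: right lifting property with respect to HDP. -/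
def IsOpenHom {X Y : HDA} (f : HDAHom X Y) : Prop :=
  ∀ (P Q : HDA) (g : HDAHom P Q), IsHDPHom g →
    ∀ (p : HDAHom P X) (q : HDAHom Q Y), f.comp p = q.comp g →
      ∃ r : HDAHom Q X, r.comp g = p ∧ f.comp r = q

/-- hd-bisimilarity: a span of open maps. -/
def HdBisimilar (X Y : HDA) : Prop :=
  ∃ (Z : HDA) (f : HDAHom Z X) (g : HDAHom Z Y), IsOpenHom f ∧ IsOpenHom g

/-- A higher-dimensional tree: every cube is the end of exactly one homotopy
class of pointed cube paths. -/
def HDA.IsTree (X : HDA) : Prop :=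
  ∀ x : X.toPCSet.Cell,
    (∃ l, X.IsPointedPath l ∧ l.getLast? = some x) ∧
    ∀ l₁ l₂ : List X.toPCSet.Cell, X.IsPointedPath l₁ → l₁.getLast? = some x →
      X.IsPointedPath l₂ → l₂.getLast? = some x → X.toPCSet.Homotopic l₁ l₂

/-- An unfolding of the HDA `X`: an HDA `Xu` whose `n`-cubes are exactly the
homotopy classes (`cls`) of pointed cube paths of `X` ending in an `n`-cube,
with the face maps, base point and projection of Definition 4.3. -/
structure Unfolding (X : HDA) where
  Xu : HDA
  proj : HDAHom Xu X
  cls : ∀ n : ℕ, X.PPath n → Xu.cube n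
  cls_eq : ∀ (n : ℕ) (a b : X.PPath n),
    cls n a = cls n b ↔ X.toPCSet.Homotopic a.1 b.1
  cls_surj : ∀ (n : ℕ) (x : Xu.cube n), ∃ a, cls n a = x
  cls_base : ∀ a : X.PPath 0, a.1 = [⟨0, X.base⟩] → cls 0 a = Xu.base
  face_true : ∀ (n : ℕ) (k : Fin (n + 1)) (a : X.PPath (n + 1)) (c : X.cube (n + 1)),
    a.1.getLast? = some ⟨n + 1, c⟩ →
    ∀ b : X.PPath n, b.1 = a.1 ++ [⟨n, X.toPCSet.face true k c⟩] →
      Xu.toPCSet.face true k (cls (n + 1) a) = cls n b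
  face_false : ∀ (n : ℕ) (k : Fin (n + 1)) (a : X.PPath (n + 1)) (c : X.cube (n + 1)),
    a.1.getLast? = some ⟨n + 1, c⟩ →
    ∀ b : X.PPath n,
      (Xu.toPCSet.face false k (cls (n + 1) a) = cls n b ↔
        b.1.getLast? = some ⟨n, X.toPCSet.face false k c⟩ ∧
          X.toPCSet.Homotopic (b.1 ++ [⟨n + 1, c⟩]) a.1)
  proj_cls : ∀ (n : ℕ) (a : X.PPath n) (c : X.cube n),
    a.1.getLast? = some ⟨n, c⟩ → proj.toHom.map n (cls n a) = c

/-- The set `δ̃_k^0 [l]` of Definition 4.3: pointed cube paths `l'` with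
`l'` ending in `δ_k^0 c` and `l' * (c) ∼ l`. -/
def predSet (X : HDA) (n : ℕ) (k : Fin (n + 1)) (c : X.cube (n + 1))
    (l : List X.toPCSet.Cell) : Set (List X.toPCSet.Cell) :=
  { l' | X.IsPointedPath l' ∧ l'.getLast? = some ⟨n, X.toPCSet.face false k c⟩ ∧
      X.toPCSet.Homotopic (l' ++ [(⟨n + 1, c⟩ : X.toPCSet.Cell)]) l }

/-- Prefix order on homotopy classes (cubes of an unfolding): some
representatives are prefix-related. -/
def Unfolding.ClassLe {X : HDA} (U : Unfolding X) (c d : U.Xu.toPCSet.Cell) : Prop :=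
  ∃ (a : X.PPath c.1) (b : X.PPath d.1),
    U.cls c.1 a = c.2 ∧ U.cls d.1 b = d.2 ∧ a.1 <+: b.1

/-- `h` is the morphism of unfoldings induced by `g` (i.e. `g̃`). -/
def IsUnfoldMap {X Y : HDA} (UX : Unfolding X) (UY : Unfolding Y)
    (g : HDAHom X Y) (h : HDAHom UX.Xu UY.Xu) : Prop :=
  ∀ (n : ℕ) (a : X.PPath n), ∃ b : Y.PPath n,
    b.1 = a.1.map g.toHom.cell ∧ h.toHom.map n (UX.cls n a) = UY.cls n b

/-- Open maps in the category HDAh: right lifting property with respect to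
HDPh (morphisms of unfoldings corresponding to HDP-morphisms under the
projections). -/
def IsOpenHDAh {X Y : HDA} (UX : Unfolding X) (UY : Unfolding Y)
    (f : HDAHom UX.Xu UY.Xu) : Prop :=
  ∀ (P Q : HDA) (UP : Unfolding P) (UQ : Unfolding Q) (g : HDAHom UP.Xu UQ.Xu),
    (∃ g₀ : HDAHom P Q, IsHDPHom g₀ ∧ UQ.proj.comp g = g₀.comp UP.proj) →
    ∀ (p : HDAHom UP.Xu UX.Xu) (q : HDAHom UQ.Xu UY.Xu),
      f.comp p = q.comp g →
      ∃ r : HDAHom UQ.Xu UX.Xu, r.comp g = p ∧ f.comp r = q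

/-- Homotopy bisimilarity: a span of open maps in HDAh. -/
def HomotopyBisimilar (X Y : HDA) : Prop :=
  ∃ (Z : HDA) (UX : Unfolding X) (UY : Unfolding Y) (UZ : Unfolding Z)
    (f : HDAHom UZ.Xu UX.Xu) (g : HDAHom UZ.Xu UY.Xu),
    IsOpenHDAh UZ UX f ∧ IsOpenHDAh UZ UY g

/-- Prefix-matching bisimulation on unfoldings (condition (4) of Prop 6.5). -/
def PrefixBisim {X Y : HDA} (UX : Unfolding X) (UY : Unfolding Y) : Prop :=
  ∃ R : Set (UX.Xu.toPCSet.Cell × UY.Xu.toPCSet.Cell),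
    PrecubRel UX.Xu.toPCSet UY.Xu.toPCSet R ∧
    ((⟨0, UX.Xu.base⟩, ⟨0, UY.Xu.base⟩) : _ × _) ∈ R ∧
    ∀ (c : UX.Xu.toPCSet.Cell) (d : UY.Xu.toPCSet.Cell), (c, d) ∈ R →
      (∀ c₂, UX.ClassLe c c₂ → ∃ d₂, UY.ClassLe d d₂ ∧ (c₂, d₂) ∈ R) ∧
      (∀ d₂, UY.ClassLe d d₂ → ∃ c₂, UX.ClassLe c c₂ ∧ (c₂, d₂) ∈ R)

/-- One refinement step of the fixed-point algorithm deciding hd-bisimilarity. -/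
def refineStep (X Y : HDA) (S : Set (X.toPCSet.Cell × Y.toPCSet.Cell)) :
    Set (X.toPCSet.Cell × Y.toPCSet.Cell) :=
  { p | p ∈ S ∧ p.1.1 = p.2.1 ∧
    (∀ (n : ℕ) (x : X.cube (n + 1)) (y : Y.cube (n + 1)),
      p = (⟨n + 1, x⟩, ⟨n + 1, y⟩) →
      ∀ (ν : Bool) (k : Fin (n + 1)),
        ((⟨n, X.toPCSet.face ν k x⟩, ⟨n, Y.toPCSet.face ν k y⟩) : _ × _) ∈ S) ∧
    (∀ (n : ℕ) (x₁ : X.cube n) (y₁ : Y.cube n),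
      p = (⟨n, x₁⟩, ⟨n, y₁⟩) →
      (∀ (x₂ : X.cube (n + 1)) (k : Fin (n + 1)), x₁ = X.toPCSet.face false k x₂ →
        ∃ y₂ : Y.cube (n + 1), y₁ = Y.toPCSet.face false k y₂ ∧
          ((⟨n + 1, x₂⟩, ⟨n + 1, y₂⟩) : _ × _) ∈ S) ∧
      (∀ (y₂ : Y.cube (n + 1)) (k : Fin (n + 1)), y₁ = Y.toPCSet.face false k y₂ →
        ∃ x₂ : X.cube (n + 1), x₁ = X.toPCSet.face false k x₂ ∧
          ((⟨n + 1, x₂⟩, ⟨n + 1, y₂⟩) : _ × _) ∈ S)) }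

/-!
A pointed cube path of `X` lifts to `X̃` by sending each prefix to its homotopy class. The face
maps of `X̃` are made so that every step of `X` lifts, and so that a step of `X̃` is determined by
its projection; hence every pointed path of `X̃` is the lift of its projection. Since the four
exchange conditions only relate faces of consecutive prefixes, lifting turns adjacent paths into
equal or adjacent ones. So two pointed paths of `X̃` with the same end are lifts of homotopic
paths of `X`, and are homotopic.

If `X` is a tree, a cube of `X̃` is determined by its projection, so `π_X` is bijective in each
dimension, and a dimensionwise bijective morphism of HDA is an isomorphism.
-/

namespace PCSet

variable {X : PCSet}

theorem Hom.cell_face {Y : PCSet} (f : Hom X Y) (n : ℕ) (ν : Bool) (k : Fin (n + 1))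
    (c : X.cube (n + 1)) :
    f.cell ⟨n, X.face ν k c⟩ = ⟨n, Y.face ν k (f.map (n + 1) c)⟩ := by
  simp only [Hom.cell, f.comm]

theorem Step.map {Y : PCSet} (f : Hom X Y) {x y : X.Cell} (h : X.Step x y) :
    Y.Step (f.cell x) (f.cell y) := by
  rcases h with ⟨n, k, c, rfl, rfl⟩ | ⟨n, k, c, rfl, rfl⟩
  · exact Or.inl ⟨n, k, f.map (n + 1) c, f.cell_face n false k c, rfl⟩
  · exact Or.inr ⟨n, k, f.map (n + 1) c, rfl, f.cell_face n true k c⟩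

/-- `Adjacent` with the index `p` of the exchanged cube made explicit. -/
def AdjacentAt (X : PCSet) (p : ℕ) (l₁ l₂ : List X.Cell) : Prop :=
  X.IsCubePath l₁ ∧ X.IsCubePath l₂ ∧ l₁.length = l₂.length ∧ 0 < p ∧ p + 1 < l₁.length ∧
    (∀ q : ℕ, q ≠ p → l₁[q]? = l₂[q]?) ∧
    l₁[p]? ≠ l₂[p]? ∧
    ∃ a b b' c : X.Cell,
      l₁[p - 1]? = some a ∧ l₁[p]? = some b ∧ l₂[p]? = some b' ∧
      l₁[p + 1]? = some c ∧ X.AdjMid a b b' c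

theorem adjacent_iff_exists_adjacentAt {l₁ l₂ : List X.Cell} :
    X.Adjacent l₁ l₂ ↔ ∃ p, X.AdjacentAt p l₁ l₂ :=
  ⟨fun ⟨h₁, h₂, hlen, p, h⟩ => ⟨p, h₁, h₂, hlen, h⟩,
    fun ⟨p, h₁, h₂, hlen, h⟩ => ⟨h₁, h₂, hlen, p, h⟩⟩

theorem AdjMid.symm {a b b' c : X.Cell} (h : X.AdjMid a b b' c) : X.AdjMid a b' b c := by
  unfold AdjMid at h ⊢
  tauto

namespace AdjacentAt

variable {p : ℕ} {l₁ l₂ : List X.Cell}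

theorem symm (h : X.AdjacentAt p l₁ l₂) : X.AdjacentAt p l₂ l₁ := by
  obtain ⟨h₁, h₂, hlen, hp, hpl, hagree, hne, a, b, b', c, ha, hb, hb', hc, hmid⟩ := h
  refine ⟨h₂, h₁, hlen.symm, hp, hlen ▸ hpl, fun q hq => (hagree q hq).symm, Ne.symm hne,
    a, b', b, c, ?_, hb', hb, ?_, hmid.symm⟩
  · rwa [← hagree (p - 1) (by omega)]
  · rwa [← hagree (p + 1) (by omega)]

theorem head?_eq (h : X.AdjacentAt p l₁ l₂) : l₁.head? = l₂.head? := by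
  obtain ⟨-, -, -, hp, -, hagree, -⟩ := h
  simpa only [List.head?_eq_getElem?] using hagree 0 hp.ne

theorem getLast?_eq (h : X.AdjacentAt p l₁ l₂) : l₁.getLast? = l₂.getLast? := by
  obtain ⟨-, -, hlen, -, hpl, hagree, -⟩ := h
  simpa only [List.getLast?_eq_getElem?, hlen] using hagree (l₂.length - 1) (by omega)

theorem take_eq {m : ℕ} (h : X.AdjacentAt p l₁ l₂) (hm : m ≤ p) : l₁.take m = l₂.take m := by
  obtain ⟨-, -, -, -, -, hagree, -⟩ := h
  refine List.ext_getElem? fun q => ?_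
  simp only [List.getElem?_take]
  split_ifs with hq
  exacts [hagree q (by omega), rfl]

theorem take {m : ℕ} (h : X.AdjacentAt p l₁ l₂) (hm : p + 1 < m) :
    X.AdjacentAt p (l₁.take m) (l₂.take m) := by
  obtain ⟨h₁, h₂, hlen, hp, hpl, hagree, hne, a, b, b', c, ha, hb, hb', hc, hmid⟩ := h
  have htake : ∀ (l : List X.Cell) (q : ℕ), q ≤ p + 1 → (l.take m)[q]? = l[q]? := by
    intro l q hq
    simp [show q < m by omega]
  refine ⟨⟨?_, h₁.2.take m⟩, ⟨?_, h₂.2.take m⟩, by simp [hlen], hp, by simp; omega,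
    fun q hq => by simp only [List.getElem?_take, hagree q hq], ?_, a, b, b', c, ?_⟩
  · simpa using ⟨by omega, h₁.1⟩
  · simpa using ⟨by omega, h₂.1⟩
  · rwa [htake _ _ (by omega), htake _ _ (by omega)]
  · simp only [htake _ _ (show p - 1 ≤ p + 1 by omega), htake _ _ (show p ≤ p + 1 by omega),
      htake _ _ le_rfl]
    exact ⟨ha, hb, hb', hc, hmid⟩

theorem homotopic (h : X.AdjacentAt p l₁ l₂) : X.Homotopic l₁ l₂ :=
  .single (adjacent_iff_exists_adjacentAt.mpr ⟨p, h⟩)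

end AdjacentAt

theorem Adjacent.symm {l₁ l₂ : List X.Cell} (h : X.Adjacent l₁ l₂) : X.Adjacent l₂ l₁ :=
  have ⟨p, hp⟩ := adjacent_iff_exists_adjacentAt.mp h
  adjacent_iff_exists_adjacentAt.mpr ⟨p, hp.symm⟩

theorem Homotopic.symm {l₁ l₂ : List X.Cell} (h : X.Homotopic l₁ l₂) : X.Homotopic l₂ l₁ := by
  induction h with
  | refl => exact .refl
  | tail _ hadj ih => exact .head hadj.symm ih

theorem Homotopic.getLast?_eq {l₁ l₂ : List X.Cell} (h : X.Homotopic l₁ l₂) :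
    l₁.getLast? = l₂.getLast? := by
  induction h with
  | refl => rfl
  | tail _ hadj ih =>
    obtain ⟨p, hp⟩ := adjacent_iff_exists_adjacentAt.mp hadj
    exact ih.trans hp.getLast?_eq

end PCSet

namespace HDA

variable {X : HDA} {l : List X.toPCSet.Cell}

theorem IsPointedPath.of_append {l' : List X.toPCSet.Cell} (h : X.IsPointedPath (l ++ l'))
    (hl : l ≠ []) : X.IsPointedPath l :=
  ⟨⟨hl, h.1.2.left_of_append⟩, by rw [← h.2, List.head?_append_of_ne_nil _ hl]⟩

theorem IsPointedPath.take (h : X.IsPointedPath l) (j : ℕ) : X.IsPointedPath (l.take (j + 1)) :=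
  (List.take_append_drop (j + 1) l ▸ h).of_append (by simpa using h.1.1)

theorem IsPointedPath.append (h : X.IsPointedPath l) {x y : X.toPCSet.Cell}
    (hl : l.getLast? = some x) (hs : X.toPCSet.Step x y) : X.IsPointedPath (l ++ [y]) :=
  ⟨⟨by simp, h.1.2.append (List.isChain_singleton y) (by simp [hl, hs])⟩,
    by rw [List.head?_append_of_ne_nil _ h.1.1, h.2]⟩

theorem IsPointedPath.map {Y : HDA} (f : HDAHom X Y) (h : X.IsPointedPath l) :
    Y.IsPointedPath (l.map f.toHom.cell) :=
  ⟨⟨by simpa using h.1.1, List.isChain_map_of_isChain _ (fun _ _ hs => hs.map f.toHom) h.1.2⟩,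
    by simp [h.2, Hom.cell, f.pointed]⟩

theorem IsPointedPath.of_homotopic {l' : List X.toPCSet.Cell} (h : X.IsPointedPath l)
    (hh : X.toPCSet.Homotopic l l') : X.IsPointedPath l' := by
  induction hh with
  | refl => exact h
  | tail _ hadj ih =>
    obtain ⟨p, hp⟩ := adjacent_iff_exists_adjacentAt.mp hadj
    exact ⟨hp.2.1, hp.head?_eq ▸ ih.2⟩

theorem PPath.dim_eq {n m : ℕ} (a : X.PPath n) {c : X.cube m}
    (h : a.1.getLast? = some ⟨m, c⟩) : n = m := by
  obtain ⟨c', hc'⟩ := a.2.2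
  exact congrArg Sigma.fst (Option.some.inj (hc'.symm.trans h))

end HDA

theorem HDAHom.ext_map {X Y : HDA} {f g : HDAHom X Y}
    (h : ∀ n x, f.toHom.map n x = g.toHom.map n x) : f = g := by
  obtain ⟨⟨f, _⟩, _⟩ := f
  obtain ⟨⟨g, _⟩, _⟩ := g
  obtain rfl : f = g := funext₂ h
  rfl

theorem HDAHom.isIso_of_bijective {X Y : HDA} (f : HDAHom X Y)
    (hf : ∀ n, Function.Bijective (f.toHom.map n)) : f.IsIso := by
  let g n := Function.surjInv (hf n).2
  have hfg : ∀ n y, f.toHom.map n (g n y) = y := fun n => Function.surjInv_eq (hf n).2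
  have hgf : ∀ n x, g n (f.toHom.map n x) = x := fun n => Function.leftInverse_surjInv (hf n)
  refine ⟨⟨⟨g, fun n ν k y => (hf n).1 ?_⟩, (hf 0).1 ?_⟩, HDAHom.ext_map hgf, HDAHom.ext_map hfg⟩
  · rw [hfg, f.toHom.comm, hfg]
  · rw [hfg, f.pointed]

namespace Unfolding

variable {X : HDA} (U : Unfolding X)

theorem mk_cls_eq_mk_cls_iff {m n : ℕ} (a : X.PPath m) (b : X.PPath n) :
    (⟨m, U.cls m a⟩ : U.Xu.toPCSet.Cell) = ⟨n, U.cls n b⟩ ↔ X.toPCSet.Homotopic a.1 b.1 := by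
  constructor
  · intro h
    obtain ⟨rfl, h⟩ := Sigma.mk.inj_iff.mp h
    exact (U.cls_eq m a b).mp (eq_of_heq h)
  · intro h
    obtain ⟨c, hc⟩ := b.2.2
    obtain rfl : m = n := a.dim_eq (h.getLast?_eq.trans hc)
    rw [(U.cls_eq m a b).mpr h]

open Classical in
/-- The homotopy class of a pointed cube path, as a cube of the unfolding; junk value
`⟨0, Xu.base⟩` on lists that are not pointed cube paths. -/
noncomputable def classOf (l : List X.toPCSet.Cell) : U.Xu.toPCSet.Cell :=
  if h : X.IsPointedPath l then
    ⟨_, U.cls _ ⟨l, h, (l.getLast h.1.1).2, List.getLast?_eq_getLast h.1.1⟩⟩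
  else ⟨0, U.Xu.base⟩

theorem classOf_eq {n : ℕ} (a : X.PPath n) : U.classOf a.1 = ⟨n, U.cls n a⟩ := by
  rw [classOf, dif_pos a.2.1]
  exact (U.mk_cls_eq_mk_cls_iff _ a).mpr .refl

theorem classOf_eq_classOf_iff {l l' : List X.toPCSet.Cell} (h : X.IsPointedPath l)
    (h' : X.IsPointedPath l') : U.classOf l = U.classOf l' ↔ X.toPCSet.Homotopic l l' := by
  rw [classOf, classOf, dif_pos h, dif_pos h']
  exact U.mk_cls_eq_mk_cls_iff _ _

theorem exists_classOf_eq_mk {l : List X.toPCSet.Cell} (h : X.IsPointedPath l) {n : ℕ}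
    {c : X.cube n} (hl : l.getLast? = some ⟨n, c⟩) : ∃ ξ, U.classOf l = ⟨n, ξ⟩ :=
  ⟨_, U.classOf_eq ⟨l, h, c, hl⟩⟩

theorem exists_classOf_eq (ξ : U.Xu.toPCSet.Cell) :
    ∃ l, X.IsPointedPath l ∧ U.classOf l = ξ := by
  obtain ⟨a, ha⟩ := U.cls_surj ξ.1 ξ.2
  exact ⟨a.1, a.2.1, by rw [U.classOf_eq, ha]⟩

theorem classOf_base : U.classOf [⟨0, X.base⟩] = ⟨0, U.Xu.base⟩ := by
  let a : X.PPath 0 := ⟨[⟨0, X.base⟩], ⟨⟨by simp, List.isChain_singleton _⟩, rfl⟩, X.base, rfl⟩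
  rw [U.classOf_eq a, U.cls_base a rfl]

theorem getLast?_eq_cell_classOf {l : List X.toPCSet.Cell} (h : X.IsPointedPath l) :
    l.getLast? = some (U.proj.toHom.cell (U.classOf l)) := by
  obtain ⟨⟨n, c⟩, hl⟩ : ∃ x, l.getLast? = some x :=
    ⟨_, List.getLast?_eq_getLast h.1.1⟩
  rw [hl, U.classOf_eq ⟨l, h, c, hl⟩]
  exact congrArg (fun x => some (⟨n, x⟩ : X.toPCSet.Cell)) (U.proj_cls n ⟨l, h, c, hl⟩ c hl).symm

theorem classOf_append_face_true {l : List X.toPCSet.Cell} (h : X.IsPointedPath l) {n : ℕ}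
    {c : X.cube (n + 1)} (hl : l.getLast? = some ⟨n + 1, c⟩) {ξ : U.Xu.cube (n + 1)}
    (hξ : U.classOf l = ⟨n + 1, ξ⟩) (k : Fin (n + 1)) :
    U.classOf (l ++ [⟨n, X.toPCSet.face true k c⟩]) = ⟨n, U.Xu.toPCSet.face true k ξ⟩ := by
  let a : X.PPath (n + 1) := ⟨l, h, c, hl⟩
  let b : X.PPath n := ⟨_, h.append hl (Or.inr ⟨n, k, c, rfl, rfl⟩), _, List.getLast?_concat⟩
  obtain rfl : ξ = U.cls (n + 1) a := sigma_mk_injective (hξ.symm.trans (U.classOf_eq a))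
  rw [U.face_true n k a c hl b rfl]
  exact U.classOf_eq b

theorem classOf_eq_face_false_iff {l l' : List X.toPCSet.Cell} (h : X.IsPointedPath l)
    (h' : X.IsPointedPath l') {n : ℕ} {c : X.cube (n + 1)} (hl : l.getLast? = some ⟨n + 1, c⟩)
    {ξ : U.Xu.cube (n + 1)} (hξ : U.classOf l = ⟨n + 1, ξ⟩) {k : Fin (n + 1)}
    (hl' : l'.getLast? = some ⟨n, X.toPCSet.face false k c⟩) :
    U.classOf l' = ⟨n, U.Xu.toPCSet.face false k ξ⟩ ↔
      X.toPCSet.Homotopic (l' ++ [⟨n + 1, c⟩]) l := by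
  let a : X.PPath (n + 1) := ⟨l, h, c, hl⟩
  let b : X.PPath n := ⟨l', h', _, hl'⟩
  obtain rfl : ξ = U.cls (n + 1) a := sigma_mk_injective (hξ.symm.trans (U.classOf_eq a))
  rw [U.classOf_eq b, eq_comm, sigma_mk_injective.eq_iff, U.face_false n k a c hl b]
  exact and_iff_right hl'

theorem classOf_face_false {l : List X.toPCSet.Cell} (h : X.IsPointedPath l) {n : ℕ}
    {k : Fin (n + 1)} {c : X.cube (n + 1)} (hl : l.getLast? = some ⟨n, X.toPCSet.face false k c⟩)
    {ξ : U.Xu.cube (n + 1)} (hξ : U.classOf (l ++ [⟨n + 1, c⟩]) = ⟨n + 1, ξ⟩) :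
    U.classOf l = ⟨n, U.Xu.toPCSet.face false k ξ⟩ :=
  (U.classOf_eq_face_false_iff (h.append hl (Or.inl ⟨n, k, c, rfl, rfl⟩)) h
    List.getLast?_concat hξ hl).mpr .refl

theorem step_classOf_append {l : List X.toPCSet.Cell} (h : X.IsPointedPath l)
    {x y : X.toPCSet.Cell} (hl : l.getLast? = some x) (hs : X.toPCSet.Step x y) :
    U.Xu.toPCSet.Step (U.classOf l) (U.classOf (l ++ [y])) := by
  have hy := h.append hl hs
  rcases hs with ⟨n, k, c, rfl, rfl⟩ | ⟨n, k, c, rfl, rfl⟩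
  · obtain ⟨ξ, hξ⟩ := U.exists_classOf_eq_mk hy List.getLast?_concat
    exact Or.inl ⟨n, k, ξ, U.classOf_face_false h hl hξ, hξ⟩
  · obtain ⟨ξ, hξ⟩ := U.exists_classOf_eq_mk h hl
    exact Or.inr ⟨n, k, ξ, hξ, U.classOf_append_face_true h hl hξ k⟩

/-- Unique lifting of steps: a step of `X̃` out of the class of `l` is determined by its
projection. -/
theorem classOf_append_cell {l : List X.toPCSet.Cell} (h : X.IsPointedPath l)
    {x y : U.Xu.toPCSet.Cell} (hl : l.getLast? = some (U.proj.toHom.cell x))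
    (hx : U.classOf l = x) (hs : U.Xu.toPCSet.Step x y) :
    U.classOf (l ++ [U.proj.toHom.cell y]) = y := by
  have hy := h.append hl (hs.map U.proj.toHom)
  rcases hs with ⟨n, k, c, rfl, rfl⟩ | ⟨n, k, c, rfl, rfl⟩
  · obtain ⟨l', h', hl'⟩ := U.exists_classOf_eq ⟨n + 1, c⟩
    rw [Hom.cell_face] at hl
    have hl'last : l'.getLast? = some ⟨n + 1, U.proj.toHom.map (n + 1) c⟩ := by
      rw [U.getLast?_eq_cell_classOf h', hl']
      rfl
    have hh := (U.classOf_eq_face_false_iff h' h hl'last hl' hl).mp hx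
    exact ((U.classOf_eq_classOf_iff hy h').mpr hh).trans hl'
  · rw [Hom.cell_face]
    exact U.classOf_append_face_true h hl hx k

noncomputable def liftPath (a : List X.toPCSet.Cell) : List U.Xu.toPCSet.Cell :=
  (List.range a.length).map fun j => U.classOf (a.take (j + 1))

theorem getElem?_liftPath (a : List X.toPCSet.Cell) (j : ℕ) :
    (U.liftPath a)[j]? = if j < a.length then some (U.classOf (a.take (j + 1))) else none := by
  split_ifs with hj <;> simp [liftPath, hj]

theorem isPointedPath_liftPath {a : List X.toPCSet.Cell} (h : X.IsPointedPath a) :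
    U.Xu.IsPointedPath (U.liftPath a) := by
  have hne : a ≠ [] := h.1.1
  refine ⟨⟨by simpa [liftPath] using hne, List.isChain_iff_getElem.mpr fun j hj => ?_⟩, ?_⟩
  · have hj' : j + 1 < a.length := by simpa [liftPath] using hj
    simp only [liftPath, List.getElem_map, List.getElem_range]
    rw [List.take_succ (i := j + 1), List.getElem?_eq_getElem hj', Option.toList_some]
    exact U.step_classOf_append (h.take j)
      (by simp [List.getLast?_take, show j < a.length by omega])
      (List.isChain_iff_getElem.mp h.1.2 j hj')
  · have h0 : 0 < a.length := List.length_pos_iff.mpr hne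
    rw [List.head?_eq_getElem?, getElem?_liftPath, if_pos h0, List.take_one, h.2]
    exact congrArg some U.classOf_base

theorem getLast?_liftPath {a : List X.toPCSet.Cell} (h : a ≠ []) :
    (U.liftPath a).getLast? = some (U.classOf a) := by
  have h0 : 0 < a.length := List.length_pos_iff.mpr h
  rw [List.getLast?_eq_getElem?, getElem?_liftPath]
  simp [liftPath, h0, Nat.sub_add_cancel h0]

theorem classOf_take_map_cell {L : List U.Xu.toPCSet.Cell} (hL : U.Xu.IsPointedPath L) :
    ∀ (j : ℕ) (hj : j < L.length), U.classOf ((L.map U.proj.toHom.cell).take (j + 1)) = L[j]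
  | 0, hj => by
    have hL0 : L[0] = ⟨0, U.Xu.base⟩ := by simpa [List.head?_eq_getElem?, hj] using hL.2
    rw [List.take_one, (hL.map U.proj).2, hL0]
    exact U.classOf_base
  | j + 1, hj => by
    rw [List.take_succ, List.getElem?_map, List.getElem?_eq_getElem hj]
    exact U.classOf_append_cell ((hL.map U.proj).take j)
      (by simp [List.getLast?_take, show j < L.length by omega])
      (classOf_take_map_cell hL j (by omega)) (List.isChain_iff_getElem.mp hL.1.2 j hj)

theorem liftPath_map_cell {L : List U.Xu.toPCSet.Cell} (hL : U.Xu.IsPointedPath L) :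
    U.liftPath (L.map U.proj.toHom.cell) = L :=
  List.ext_getElem (by simp [liftPath]) fun j hj _ => by
    simp only [liftPath, List.getElem_map, List.getElem_range]
    exact U.classOf_take_map_cell hL j (by simpa [liftPath] using hj)

section AdjMid

variable {P : List X.toPCSet.Cell} {a b b' c : X.toPCSet.Cell}

theorem adj1_classOf (hP : X.IsPointedPath P) (hPa : P.getLast? = some a)
    (hbc : X.IsPointedPath (P ++ [b] ++ [c])) (hb'c : X.IsPointedPath (P ++ [b'] ++ [c]))
    (hC : U.classOf (P ++ [b'] ++ [c]) = U.classOf (P ++ [b] ++ [c]))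
    (h : X.toPCSet.Adj1 a b b' c) :
    U.Xu.toPCSet.Adj1 (U.classOf P) (U.classOf (P ++ [b])) (U.classOf (P ++ [b']))
      (U.classOf (P ++ [b] ++ [c])) := by
  obtain ⟨n, k, l, hk, hl, hkl, u, rfl, rfl, rfl, rfl, ha⟩ := h
  obtain ⟨ξ, hξ⟩ := U.exists_classOf_eq_mk hbc List.getLast?_concat
  have hB := U.classOf_face_false (hbc.of_append (by simp)) List.getLast?_concat hξ
  have hB' := U.classOf_face_false (hb'c.of_append (by simp)) List.getLast?_concat (hC.trans hξ)
  exact ⟨n, k, l, hk, hl, hkl, ξ, hξ, hB, hB', U.classOf_face_false hP hPa hB,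
    U.classOf_face_false hP (hPa.trans (congrArg some ha)) hB'⟩

theorem adj2_classOf (hP : X.IsPointedPath P) (hPa : P.getLast? = some a)
    (hbc : X.IsPointedPath (P ++ [b] ++ [c])) (hb'c : X.IsPointedPath (P ++ [b'] ++ [c]))
    (hC : U.classOf (P ++ [b'] ++ [c]) = U.classOf (P ++ [b] ++ [c]))
    (h : X.toPCSet.Adj2 a b b' c) :
    U.Xu.toPCSet.Adj2 (U.classOf P) (U.classOf (P ++ [b])) (U.classOf (P ++ [b']))
      (U.classOf (P ++ [b] ++ [c])) := by
  obtain ⟨n, k, l, hk, hl, hkl, u, rfl, rfl, rfl, rfl, hc⟩ := h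
  obtain ⟨ξ, hξ⟩ := U.exists_classOf_eq_mk hP hPa
  have hB := U.classOf_append_face_true hP hPa hξ ⟨k, hk⟩
  have hB' := U.classOf_append_face_true hP hPa hξ ⟨l - 1, by omega⟩
  refine ⟨n, k, l, hk, hl, hkl, ξ, hξ, hB, hB',
    U.classOf_append_face_true (hbc.of_append (by simp)) List.getLast?_concat hB ⟨l, hl⟩, ?_⟩
  rw [← hC, hc]
  exact U.classOf_append_face_true (hb'c.of_append (by simp)) List.getLast?_concat hB' ⟨k, _⟩

theorem adj3_classOf (hP : X.IsPointedPath P) (hPa : P.getLast? = some a)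
    (hbc : X.IsPointedPath (P ++ [b] ++ [c])) (hb'c : X.IsPointedPath (P ++ [b'] ++ [c]))
    (hC : U.classOf (P ++ [b'] ++ [c]) = U.classOf (P ++ [b] ++ [c]))
    (h : X.toPCSet.Adj3 a b b' c) :
    U.Xu.toPCSet.Adj3 (U.classOf P) (U.classOf (P ++ [b])) (U.classOf (P ++ [b']))
      (U.classOf (P ++ [b] ++ [c])) := by
  obtain ⟨n, k, l, hk, hl, hkl, u, rfl, rfl, rfl, rfl⟩ := h
  have hPb' := hb'c.of_append (by simp)
  obtain ⟨ξ, hξ⟩ := U.exists_classOf_eq_mk hPb' List.getLast?_concat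
  have hc := hC.symm.trans (U.classOf_append_face_true hPb' List.getLast?_concat hξ ⟨l, hl⟩)
  exact ⟨n, k, l, hk, hl, hkl, ξ, hξ,
    U.classOf_face_false (hbc.of_append (by simp)) List.getLast?_concat hc,
    U.classOf_face_false hP hPa hξ, hc⟩

theorem adj4_classOf (hP : X.IsPointedPath P) (hPa : P.getLast? = some a)
    (hb'c : X.IsPointedPath (P ++ [b'] ++ [c]))
    (hC : U.classOf (P ++ [b'] ++ [c]) = U.classOf (P ++ [b] ++ [c]))
    (h : X.toPCSet.Adj4 a b b' c) :
    U.Xu.toPCSet.Adj4 (U.classOf P) (U.classOf (P ++ [b])) (U.classOf (P ++ [b']))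
      (U.classOf (P ++ [b] ++ [c])) := by
  obtain ⟨n, k, l, hk, hl, hkl, u, rfl, rfl, rfl, rfl⟩ := h
  have hPb' := hb'c.of_append (by simp)
  obtain ⟨ξ, hξ⟩ := U.exists_classOf_eq_mk hPb' List.getLast?_concat
  have hA := U.classOf_face_false hP hPa hξ
  exact ⟨n, k, l, hk, hl, hkl, ξ, hξ, U.classOf_append_face_true hP hPa hA ⟨k, hk⟩, hA,
    hC.symm.trans (U.classOf_append_face_true hPb' List.getLast?_concat hξ ⟨k, _⟩)⟩

theorem adjMid_classOf (hP : X.IsPointedPath P) (hPa : P.getLast? = some a)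
    (hbc : X.IsPointedPath (P ++ [b] ++ [c])) (hb'c : X.IsPointedPath (P ++ [b'] ++ [c]))
    (hhom : X.toPCSet.Homotopic (P ++ [b] ++ [c]) (P ++ [b'] ++ [c]))
    (h : X.toPCSet.AdjMid a b b' c) :
    U.Xu.toPCSet.AdjMid (U.classOf P) (U.classOf (P ++ [b])) (U.classOf (P ++ [b']))
      (U.classOf (P ++ [b] ++ [c])) := by
  have hC := (U.classOf_eq_classOf_iff hb'c hbc).mpr hhom.symm
  have h₁ := U.adj1_classOf hP hPa hbc hb'c hC
  have h₂ := U.adj2_classOf hP hPa hbc hb'c hC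
  have h₃ := U.adj3_classOf hP hPa hbc hb'c hC
  have h₄ := U.adj4_classOf hP hPa hb'c hC
  have h₅ := U.adj1_classOf hP hPa hb'c hbc hC.symm
  have h₆ := U.adj2_classOf hP hPa hb'c hbc hC.symm
  have h₇ := U.adj3_classOf hP hPa hb'c hbc hC.symm
  have h₈ := U.adj4_classOf hP hPa hbc hC.symm
  rw [hC] at h₅ h₆ h₇ h₈
  exact h.imp h₁ (.imp h₂ (.imp h₃ (.imp h₄ (.imp h₅ (.imp h₆ (.imp h₇ h₈))))))

end AdjMid

theorem classOf_take_eq_of_ne {a a' : List X.toPCSet.Cell} {p q : ℕ} (ha : X.IsPointedPath a)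
    (h : X.toPCSet.AdjacentAt p a a') (hq : q ≠ p) :
    U.classOf (a.take (q + 1)) = U.classOf (a'.take (q + 1)) := by
  rcases Nat.lt_or_gt_of_ne hq with hq | hq
  · rw [h.take_eq (by omega)]
  · have ha' := ha.of_homotopic h.homotopic
    exact (U.classOf_eq_classOf_iff (ha.take q) (ha'.take q)).mpr
      (h.take (by omega)).homotopic

theorem liftPath_eq_or_adjacentAt {a a' : List X.toPCSet.Cell} {p : ℕ} (ha : X.IsPointedPath a)
    (h : X.toPCSet.AdjacentAt p a a') :
    U.liftPath a = U.liftPath a' ∨ U.Xu.toPCSet.AdjacentAt p (U.liftPath a) (U.liftPath a') := by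
  have ha' := ha.of_homotopic h.homotopic
  obtain ⟨-, -, hlen, hp, hpl, hagree, -, A, B, B', C, hA, hB, hB', hC, hmid⟩ := id h
  have hlift : ∀ q ≠ p, (U.liftPath a)[q]? = (U.liftPath a')[q]? := fun q hq => by
    simp only [getElem?_liftPath, hlen, U.classOf_take_eq_of_ne ha h hq]
  by_cases hpeq : U.classOf (a.take (p + 1)) = U.classOf (a'.take (p + 1))
  · refine .inl (List.ext_getElem? fun q => ?_)
    by_cases hq : q = p
    · simp only [getElem?_liftPath, hlen, hq, hpeq]
    · exact hlift q hq
  set P := a.take p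
  have hPB : a.take (p + 1) = P ++ [B] := by rw [List.take_succ, hB, Option.toList_some]
  have hPB' : a'.take (p + 1) = P ++ [B'] := by
    rw [List.take_succ, hB', Option.toList_some, ← h.take_eq le_rfl]
  have hPBC : a.take (p + 1 + 1) = P ++ [B] ++ [C] := by
    rw [List.take_succ, hPB, hC, Option.toList_some]
  have hPB'C : a'.take (p + 1 + 1) = P ++ [B'] ++ [C] := by
    rw [List.take_succ, hPB', ← hagree (p + 1) (by omega), hC, Option.toList_some]
  have hP : X.IsPointedPath P := by simpa [Nat.sub_add_cancel hp] using ha.take (p - 1)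
  have hPA : P.getLast? = some A := by simp [P, List.getLast?_take, hp.ne', hA]
  have hhom : X.toPCSet.Homotopic (P ++ [B] ++ [C]) (P ++ [B'] ++ [C]) := by
    rw [← hPBC, ← hPB'C]
    exact (h.take (by omega)).homotopic
  refine .inr ⟨(U.isPointedPath_liftPath ha).1, (U.isPointedPath_liftPath ha').1,
    by simp [liftPath, hlen], hp, by simpa [liftPath] using hpl, hlift,
    by simpa [getElem?_liftPath, hlen, show p < a'.length by omega] using hpeq,
    _, _, _, _, ?_, ?_, ?_, ?_,
    U.adjMid_classOf hP hPA (hPBC ▸ ha.take (p + 1)) (hPB'C ▸ ha'.take (p + 1)) hhom hmid⟩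
  · simp [getElem?_liftPath, show p - 1 < a.length by omega, Nat.sub_add_cancel hp, P]
  · simp [getElem?_liftPath, show p < a.length by omega, hPB]
  · simp [getElem?_liftPath, show p < a'.length by omega, hPB']
  · simp [getElem?_liftPath, hpl, hPBC]

theorem liftPath_homotopic {a a' : List X.toPCSet.Cell} (ha : X.IsPointedPath a)
    (h : X.toPCSet.Homotopic a a') : U.Xu.toPCSet.Homotopic (U.liftPath a) (U.liftPath a') := by
  induction h with
  | refl => exact .refl
  | tail hab hadj ih =>
    obtain ⟨p, hp⟩ := adjacent_iff_exists_adjacentAt.mp hadj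
    rcases U.liftPath_eq_or_adjacentAt (ha.of_homotopic hab) hp with heq | hadj'
    · exact heq ▸ ih
    · exact ih.tail (adjacent_iff_exists_adjacentAt.mpr ⟨p, hadj'⟩)

theorem isTree : U.Xu.IsTree := by
  intro ξ
  obtain ⟨a, ha, rfl⟩ := U.exists_classOf_eq ξ
  refine ⟨⟨_, U.isPointedPath_liftPath ha, U.getLast?_liftPath ha.1.1⟩, ?_⟩
  intro L₁ L₂ h₁ hl₁ h₂ hl₂
  have hclass : ∀ {L}, U.Xu.IsPointedPath L → L.getLast? = some (U.classOf a) →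
      U.classOf (L.map U.proj.toHom.cell) = U.classOf a := fun {L} hL hl => by
    have := U.getLast?_liftPath (a := L.map U.proj.toHom.cell) (by simpa using hL.1.1)
    rw [U.liftPath_map_cell hL, hl] at this
    exact (Option.some.inj this).symm
  rw [← U.liftPath_map_cell h₁, ← U.liftPath_map_cell h₂]
  refine U.liftPath_homotopic (h₁.map U.proj) ?_
  rw [← U.classOf_eq_classOf_iff (h₁.map U.proj) (h₂.map U.proj), hclass h₁ hl₁, hclass h₂ hl₂]

theorem bijective_proj (hX : X.IsTree) (n : ℕ) : Function.Bijective (U.proj.toHom.map n) := by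
  constructor
  · intro ξ ξ' h
    obtain ⟨l, hl, hlξ⟩ := U.exists_classOf_eq ⟨n, ξ⟩
    obtain ⟨l', hl', hlξ'⟩ := U.exists_classOf_eq ⟨n, ξ'⟩
    have hlast := U.getLast?_eq_cell_classOf hl
    have hlast' := U.getLast?_eq_cell_classOf hl'
    rw [hlξ] at hlast
    rw [hlξ', show U.proj.toHom.cell ⟨n, ξ'⟩ = U.proj.toHom.cell ⟨n, ξ⟩ from
      congrArg (Sigma.mk n) h.symm] at hlast'
    have hhom := (hX _).2 l l' hl hlast hl' hlast'
    have hξξ' := hlξ.symm.trans (((U.classOf_eq_classOf_iff hl hl').mpr hhom).trans hlξ')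
    exact sigma_mk_injective hξξ'
  · intro x
    obtain ⟨l, hl, hlast⟩ := (hX ⟨n, x⟩).1
    obtain ⟨ξ, hξ⟩ := U.exists_classOf_eq_mk hl hlast
    have hcell := U.getLast?_eq_cell_classOf hl
    rw [hξ, hlast] at hcell
    exact ⟨ξ, (sigma_mk_injective (Option.some.inj hcell)).symm⟩

end Unfolding

/-- Proposition 4.4: the unfolding of any HDA is a higher-dimensional tree,
and if `X` itself is a higher-dimensional tree then the projection
`π_X : X̃ → X` is an isomorphism of HDA. -/
theorem unfolding_is_tree (X : HDA) (U : Unfolding X) :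
    U.Xu.IsTree ∧ (X.IsTree → U.proj.IsIso) :=
  ⟨U.isTree, fun hX => U.proj.isIso_of_bijective (U.bijective_proj hX)⟩
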